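/- arXiv:2105.06329 — 3 statements merged into one kernel-verified Lean document; each statement's English description precedes it below -/
import Mathlib

section
/- Let μ be a diagonalizable endomorphism of a finite-dimensional complex vector space V. Under the dualization anti-isomorphism f ↦ f* from End(V) to End(V*), the image of the Lie algebra 𝔠(μ) of μ-nilpotent operators is exactly 𝔠(−μ*), the Lie algebra of (−μ*)-nilpotent operators on V*. -/
/-!
Fix a basis `b` of eigenvectors of `μ`, `b i` having eigenvalue `λ i`. Then `A` is `μ`-nilpotent
exactly when its matrix entry `b*ᵢ (A bⱼ)` vanishes unless `λ i - λ j ∈ ℕ+`, because the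
coordinate functional `b*ᵢ` is an eigenvector of `μ*` and so kills every eigenspace of `μ` other
than the `λ i`-one. The dual basis is an eigenbasis of `-μ*` with eigenvalues `-λ i`, and the
matrix of `A*` in it is the transpose of that of `A`, so the two conditions coincide. Finally
every endomorphism of `V*` is some `A*`, as `V` is reflexive.
-/

/-- `A` is `ν`-nilpotent: `A` maps the `ν_α`-eigenspace of `ν` into the direct
sum of the eigenspaces for eigenvalues `ν_α + m`, `m ≥ 1`. -/
def IsMuNilpotent {W : Type*} [AddCommGroup W] [Module ℂ W]
    (ν : Module.End ℂ W) (A : Module.End ℂ W) : Prop :=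
  ∀ c : ℂ, (ν.eigenspace c).map A ≤ ⨆ m : ℕ+, ν.eigenspace (c + ((m : ℕ) : ℂ))

theorem Module.exists_dualMap_eq {R M N : Type*} [CommSemiring R] [AddCommMonoid M] [Module R M]
    [AddCommMonoid N] [Module R N] [IsReflexive R N] (B : Dual R N →ₗ[R] Dual R M) :
    ∃ A : M →ₗ[R] N, A.dualMap = B :=
  ⟨(evalEquiv R N).symm.toLinearMap ∘ₗ B.dualMap ∘ₗ Dual.eval R M, by ext φ v; simp⟩

namespace Module.End

variable {K W : Type*} [Field K] [AddCommGroup W] [Module K W]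

theorem eigenspace_neg (f : End K W) (c : K) : (-f).eigenspace c = f.eigenspace (-c) := by
  ext x
  rw [mem_eigenspace_iff, mem_eigenspace_iff, LinearMap.neg_apply, neg_smul, neg_eq_iff_eq_neg]

theorem apply_eq_zero_of_mem_eigenspace_dualMap {f : End K W} {c d : K} (hcd : c ≠ d)
    {φ : Dual K W} (hφ : φ ∈ eigenspace f.dualMap c) {v : W} (hv : v ∈ f.eigenspace d) :
    φ v = 0 := by
  have h := LinearMap.congr_fun (mem_eigenspace_iff.mp hφ) v
  rw [LinearMap.dualMap_apply, mem_eigenspace_iff.mp hv, map_smul, LinearMap.smul_apply,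
    smul_eq_mul, smul_eq_mul] at h
  exact (mul_eq_zero.mp (by linear_combination h : (d - c) * φ v = 0)).resolve_left
    (sub_ne_zero.mpr hcd.symm)

open Classical in
noncomputable def eigenbasis (f : End K W) (hf : ⨆ c, f.eigenspace c = ⊤) :
    Basis (Σ c : K, Basis.ofVectorSpaceIndex K (f.eigenspace c)) K W :=
  (DirectSum.isInternal_submodule_of_iSupIndep_of_iSup_eq_top f.eigenspaces_iSupIndep hf
    ).collectedBasis fun c => Basis.ofVectorSpace K (f.eigenspace c)

theorem eigenbasis_mem_eigenspace (f : End K W) (hf : ⨆ c, f.eigenspace c = ⊤)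
    (a : Σ c : K, Basis.ofVectorSpaceIndex K (f.eigenspace c)) :
    f.eigenbasis hf a ∈ f.eigenspace a.1 := by
  classical
  exact DirectSum.IsInternal.collectedBasis_mem _ _ a

end Module.End

namespace Module.Basis

open End

variable {K W ι : Type*} [Field K] [AddCommGroup W] [Module K W]
  {b : Basis ι K W} {f : End K W} {ev : ι → K}

theorem coord_mem_eigenspace_dualMap (hb : ∀ i, b i ∈ f.eigenspace (ev i)) (i : ι) :
    b.coord i ∈ eigenspace f.dualMap (ev i) := by
  classical
  rw [mem_eigenspace_iff]
  refine b.ext fun j => ?_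
  rw [LinearMap.dualMap_apply, mem_eigenspace_iff.mp (hb j), map_smul, LinearMap.smul_apply,
    coord_apply, repr_self, Finsupp.single_apply]
  split_ifs with h <;> simp [h]

theorem mem_iSup_eigenspace_iff (hb : ∀ i, b i ∈ f.eigenspace (ev i))
    {κ : Type*} (g : κ → K) (x : W) :
    x ∈ ⨆ k, f.eigenspace (g k) ↔ ∀ i, (∀ k, ev i ≠ g k) → b.coord i x = 0 := by
  constructor
  · intro hx i hi
    refine (iSup_le fun k => ?_ : ⨆ k, f.eigenspace (g k) ≤ LinearMap.ker (b.coord i)) hx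
    exact fun v hv => apply_eq_zero_of_mem_eigenspace_dualMap (hi k)
      (coord_mem_eigenspace_dualMap hb i) hv
  · intro h
    rw [← b.linearCombination_repr x, Finsupp.linearCombination_apply, Finsupp.sum]
    refine Submodule.sum_mem _ fun i _ => ?_
    by_cases hi : ∃ k, ev i = g k
    · obtain ⟨k, hk⟩ := hi
      exact Submodule.smul_mem _ _ (Submodule.mem_iSup_of_mem k (hk ▸ hb i))
    · push Not at hi
      rw [← coord_apply, h i hi, zero_smul]
      exact Submodule.zero_mem _

theorem map_eigenspace_le_iff (hb : ∀ i, b i ∈ f.eigenspace (ev i))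
    (A : End K W) (U : Submodule K W) (c : K) :
    (f.eigenspace c).map A ≤ U ↔ ∀ i, ev i = c → A (b i) ∈ U := by
  refine ⟨fun h i hi => h ⟨b i, hi ▸ hb i, rfl⟩, fun h => ?_⟩
  rintro _ ⟨v, hv, rfl⟩
  rw [← b.linearCombination_repr v, Finsupp.linearCombination_apply, Finsupp.sum, map_sum]
  refine Submodule.sum_mem _ fun i _ => ?_
  by_cases hi : ev i = c
  · rw [map_smul]
    exact Submodule.smul_mem _ _ (h i hi)
  · rw [← coord_apply, apply_eq_zero_of_mem_eigenspace_dualMap hi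
      (coord_mem_eigenspace_dualMap hb i) hv, zero_smul, map_zero]
    exact Submodule.zero_mem _

end Module.Basis

section IsMuNilpotent

open Module End

variable {W ι : Type*} [AddCommGroup W] [Module ℂ W]
  {b : Basis ι ℂ W} {ν : End ℂ W} {ev : ι → ℂ}

theorem isMuNilpotent_iff_coord (hb : ∀ i, b i ∈ ν.eigenspace (ev i)) (A : End ℂ W) :
    IsMuNilpotent ν A ↔
      ∀ i j, (∀ m : ℕ+, ev i ≠ ev j + ((m : ℕ) : ℂ)) → b.coord i (A (b j)) = 0 := by
  simp only [IsMuNilpotent, b.map_eigenspace_le_iff hb, b.mem_iSup_eigenspace_iff hb]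
  exact ⟨fun h i j => h _ j rfl i, fun h c j hj i => hj ▸ h i j⟩

theorem isMuNilpotent_neg_dualMap_dualMap_iff [Finite ι] [DecidableEq ι]
    (hb : ∀ i, b i ∈ ν.eigenspace (ev i)) (A : End ℂ W) :
    IsMuNilpotent (-ν.dualMap) A.dualMap ↔ IsMuNilpotent ν A := by
  have hb' : ∀ i, b.dualBasis i ∈ eigenspace (-ν.dualMap) (-ev i) := fun i => by
    rw [eigenspace_neg, neg_neg, Basis.coe_dualBasis]
    exact b.coord_mem_eigenspace_dualMap hb i
  rw [isMuNilpotent_iff_coord hb', isMuNilpotent_iff_coord hb, forall_comm]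
  refine forall₂_congr fun j i => ?_
  have hev : (∀ m : ℕ+, -ev i ≠ -ev j + ((m : ℕ) : ℂ)) ↔ ∀ m : ℕ+, ev j ≠ ev i + ((m : ℕ) : ℂ) :=
    forall_congr' fun m => not_congr ⟨fun h => by linear_combination h,
      fun h => by linear_combination h⟩
  rw [hev, Basis.coord_apply, Basis.dualBasis_repr, LinearMap.dualMap_apply,
    Basis.coe_dualBasis]

end IsMuNilpotent

/-- Under the dualization anti-isomorphism `f ↦ f*`, the image of the Lie
algebra `𝔠(μ)` of `μ`-nilpotent operators is exactly `𝔠(−μ*)`. -/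
theorem stmt3 {V : Type*} [AddCommGroup V] [Module ℂ V] [FiniteDimensional ℂ V]
    (μ : Module.End ℂ V)
    (hdiag : (⨆ c : ℂ, μ.eigenspace c) = ⊤) :
    ∀ B : Module.End ℂ (Module.Dual ℂ V),
      (∃ A : Module.End ℂ V, IsMuNilpotent μ A ∧ B = A.dualMap) ↔
        IsMuNilpotent (-(LinearMap.dualMap μ) : Module.End ℂ (Module.Dual ℂ V)) B := by
  classical
  have := Module.Finite.finite_basis (μ.eigenbasis hdiag)
  have hμ := isMuNilpotent_neg_dualMap_dualMap_iff (μ.eigenbasis_mem_eigenspace hdiag)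
  intro B
  constructor
  · rintro ⟨A, hA, rfl⟩
    exact (hμ A).mpr hA
  · intro hB
    obtain ⟨A, rfl⟩ := Module.exists_dualMap_eq B
    exact ⟨A, (hμ A).mp hB, rfl⟩
end

section
/- Under the hypotheses of the compatibility relations [E_i, Ṽ] = [U, Ṽ_i] and ∂_i Ṽ = [Ṽ_i, Ṽ], where the off-diagonal parts satisfy Ṽ_i − Ṽ_i' = [Γ̃, E_i] and Ṽ − Ṽ' = [Γ̃, U] for an off-diagonal matrix Γ̃ (primes denote diagonal parts), the diagonal entries of Ṽ are constant: ∂_i (Ṽ^j_j) = 0 for all i, j. -/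
/-!
Write `A ≈ [Γ, D]` when the off-diagonal part of `A` is the commutator of `Γ` with a diagonal
matrix `D = diag d`, i.e. `A a b = Γ a b (d b - d a)` for `a ≠ b`. Both `Ṽᵢ ≈ [Γ̃, Eᵢ]` and
`Ṽ ≈ [Γ̃, U]`, and for two such matrices the `(j, j)` entry of `[A, B]` is
`∑_{k ≠ j} Γ j k Γ k j ((d k - d j)(d' j - d' k) - (d' k - d' j)(d j - d k)) = 0`.
Hence `∂ᵢ Ṽ j j = [Ṽᵢ, Ṽ] j j = 0`.
-/

noncomputable section

/-- Partial derivative `∂f/∂uⁱ` of a scalar function of `n` complex variables. -/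
def pd {n : ℕ} (f : (Fin n → ℂ) → ℂ) (i : Fin n) : (Fin n → ℂ) → ℂ :=
  fun u => fderiv ℂ f u (Pi.single i 1)

/-- Entrywise partial derivative of a matrix-valued function. -/
def pdM {n : ℕ} (M : (Fin n → ℂ) → Matrix (Fin n) (Fin n) ℂ) (i : Fin n)
    (u : Fin n → ℂ) : Matrix (Fin n) (Fin n) ℂ :=
  Matrix.of fun j k => pd (fun v => M v j k) i u

/-- Diagonal part of a matrix. -/
def diagPart {n : ℕ} (M : Matrix (Fin n) (Fin n) ℂ) : Matrix (Fin n) (Fin n) ℂ :=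
  Matrix.diagonal fun j => M j j

/-- `E_i`: the matrix with a single nonzero entry `1` at `(i,i)`. -/
def Emat {n : ℕ} (i : Fin n) : Matrix (Fin n) (Fin n) ℂ :=
  Matrix.single i i 1

namespace Matrix

variable {ι R : Type*} [Fintype ι] [CommRing R]

theorem mul_diagonal_sub_diagonal_mul_apply [DecidableEq ι] (G : Matrix ι ι R) (d : ι → R)
    (a b : ι) :
    (G * diagonal d - diagonal d * G) a b = G a b * (d b - d a) := by
  simp only [sub_apply, mul_diagonal, diagonal_mul]
  ring

theorem commutator_apply_self_eq_zero_of_offDiag_eq {A B G : Matrix ι ι R} {d d' : ι → R}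
    (hA : ∀ a b, a ≠ b → A a b = G a b * (d b - d a))
    (hB : ∀ a b, a ≠ b → B a b = G a b * (d' b - d' a)) (j : ι) :
    (A * B - B * A) j j = 0 := by
  rw [sub_apply, mul_apply, mul_apply, sub_eq_zero]
  refine Finset.sum_congr rfl fun k _ => ?_
  rcases eq_or_ne k j with rfl | hkj
  · ring
  · rw [hA j k hkj.symm, hA k j hkj, hB j k hkj.symm, hB k j hkj]
    ring

end Matrix

open Matrix

theorem apply_eq_of_sub_diagPart_eq {n : ℕ} {A G : Matrix (Fin n) (Fin n) ℂ} {d : Fin n → ℂ}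
    (h : A - diagPart A = G * diagonal d - diagonal d * G) (a b : Fin n) (hab : a ≠ b) :
    A a b = G a b * (d b - d a) := by
  have hab' := congrFun (congrFun h a) b
  rwa [mul_diagonal_sub_diagonal_mul_apply, Matrix.sub_apply, diagPart, diagonal_apply_ne _ hab,
    sub_zero] at hab'

theorem Emat_eq_diagonal {n : ℕ} (i : Fin n) : Emat i = diagonal (Pi.single i 1) :=
  (diagonal_single i 1).symm

theorem stmt7_general {n : ℕ}
    (Vt : Fin n → (Fin n → ℂ) → Matrix (Fin n) (Fin n) ℂ)
    (Vm : (Fin n → ℂ) → Matrix (Fin n) (Fin n) ℂ)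
    (G : (Fin n → ℂ) → Matrix (Fin n) (Fin n) ℂ)
    (h4 : ∀ i u, pdM Vm i u = Vt i u * Vm u - Vm u * Vt i u)
    (hVi : ∀ i u, Vt i u - diagPart (Vt i u) = G u * Emat i - Emat i * G u)
    (hV : ∀ u, Vm u - diagPart (Vm u)
        = G u * Matrix.diagonal u - Matrix.diagonal u * G u) :
    ∀ i j : Fin n, ∀ u, pd (fun v => Vm v j j) i u = 0 := by
  intro i j u
  have hVi' := hVi i u
  rw [Emat_eq_diagonal] at hVi'
  change pdM Vm i u j j = 0
  rw [h4]
  exact commutator_apply_self_eq_zero_of_offDiag_eq (apply_eq_of_sub_diagPart_eq hVi')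
    (apply_eq_of_sub_diagPart_eq (hV u)) j

/-- Under the compatibility relations `[E_i,Ṽ] = [U,Ṽ_i]`, `∂_iṼ = [Ṽ_i,Ṽ]`,
with the off-diagonal structure `Ṽ_i − Ṽ_i' = [Γ̃,E_i]`, `Ṽ − Ṽ' = [Γ̃,U]`
for an off-diagonal `Γ̃`, the diagonal entries of `Ṽ` are constant in `u`. -/
theorem stmt7 {n : ℕ}
    (Vt : Fin n → (Fin n → ℂ) → Matrix (Fin n) (Fin n) ℂ)
    (Vm : (Fin n → ℂ) → Matrix (Fin n) (Fin n) ℂ)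
    (G : (Fin n → ℂ) → Matrix (Fin n) (Fin n) ℂ)
    (hGoff : ∀ u i, G u i i = 0)
    (h3 : ∀ i u, Emat i * Vm u - Vm u * Emat i
        = Matrix.diagonal u * Vt i u - Vt i u * Matrix.diagonal u)
    (h4 : ∀ i u, pdM Vm i u = Vt i u * Vm u - Vm u * Vt i u)
    (hVi : ∀ i u, Vt i u - diagPart (Vt i u) = G u * Emat i - Emat i * G u)
    (hV : ∀ u, Vm u - diagPart (Vm u)
        = G u * Matrix.diagonal u - Matrix.diagonal u * G u) :
    ∀ i j : Fin n, ∀ u, pd (fun v => Vm v j j) i u = 0 :=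
  stmt7_general Vt Vm G h4 hVi hV
end
end

section
/- With the braid group action of B_n on U_n × L_n × 𝔱 defined by the matrices B_j⁽ⁱ⁾ as above, the central element β = (β_1 ⋯ β_{n−1})ⁿ acts by simultaneous conjugation: g^β = (e^{−2πi g₃} g₁ e^{2πi g₃}, e^{−2πi g₃} g₂ e^{2πi g₃}, g₃) for all g = (g₁,g₂,g₃) ∈ U_n × L_n × 𝔱. -/
/-!
Write `M(g) = g₂ e^{-2πi g₃} g₁`. An elementary braid conjugates it, `M(g^{β_i}) = B₂⁻¹ M(g) B₂`,
while `g₃ ↦ P_i g₃ P_i` permutes its diagonal; so a row `β_1 ⋯ β_{n-1}` rotates the diagonal of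
`g₃` cyclically and conjugates `M(g)` by the product of its `B₂`'s, the matrix with columns
`e₁, …, e_{n-1}, g₂e₀`. After `n` rows `g₃` is back, and `M` has been conjugated by the product `C`
of the `n` row matrices. Because `g₂e₀` is a multiple of `M(g)e₀` (as `g₁e₀ = e₀`), an induction
over the rows computes `C = M(g) e^{2πi g₃}`, whence `M(g^β) = e^{-2πi g₃} M(g) e^{2πi g₃}`.
Uniqueness of the factors of the decomposition `M = g₂ · diagonal · g₁` into unipotent lower,
diagonal and unipotent upper parts then yields the conjugation formulas for `g₁` and `g₂`.
-/

noncomputable section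

open Matrix

/-- The matrix equal to the identity except for the 2×2 block at rows/columns
`(i, i+1)`, where it is `[[a,b],[c,d]]`. -/
def blk (n : ℕ) (i : ℕ) (a b c d : ℂ) : Matrix (Fin n) (Fin n) ℂ :=
  Matrix.of fun p q =>
    if p.1 = i ∧ q.1 = i then a
    else if p.1 = i ∧ q.1 = i + 1 then b
    else if p.1 = i + 1 ∧ q.1 = i then c
    else if p.1 = i + 1 ∧ q.1 = i + 1 then d
    else if p = q then 1 else 0

/-- Entry of an `n×n` matrix with natural-number indices (junk value `0` out of
range). -/
def entry {n : ℕ} (g : Matrix (Fin n) (Fin n) ℂ) (i j : ℕ) : ℂ :=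
  if h : i < n ∧ j < n then g ⟨i, h.1⟩ ⟨j, h.2⟩ else 0

/-- `ℏ = exp(2πi[(g₃)_{i+1,i+1} − (g₃)_{i,i}])`. -/
def hbar {n : ℕ} (g₃ : Matrix (Fin n) (Fin n) ℂ) (i : ℕ) : ℂ :=
  Complex.exp (2 * Real.pi * Complex.I * (entry g₃ (i + 1) (i + 1) - entry g₃ i i))

/-- Triple in `U_n × L_n × 𝔱` (as raw matrices). -/
abbrev Trip (n : ℕ) :=
  Matrix (Fin n) (Fin n) ℂ × Matrix (Fin n) (Fin n) ℂ × Matrix (Fin n) (Fin n) ℂ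

def B1 {n : ℕ} (g : Trip n) (i : ℕ) : Matrix (Fin n) (Fin n) ℂ :=
  blk n i (entry g.1 i (i + 1)) 1 1 0

def B2 {n : ℕ} (g : Trip n) (i : ℕ) : Matrix (Fin n) (Fin n) ℂ :=
  blk n i 0 1 1 (entry g.2.1 (i + 1) i)

def B3 {n : ℕ} (g : Trip n) (i : ℕ) : Matrix (Fin n) (Fin n) ℂ :=
  blk n i (hbar g.2.2 i * entry g.1 i (i + 1)) 1 1 0

/-- Permutation matrix for the transposition `i ↔ i+1`. -/
def Pmat (n : ℕ) (i : ℕ) : Matrix (Fin n) (Fin n) ℂ := blk n i 0 1 1 0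

/-- The action of the elementary braid `β_{i+1}` (0-indexed `i`). -/
def act (n : ℕ) (i : ℕ) (g : Trip n) : Trip n :=
  ((B1 g i)⁻¹ * g.1 * B2 g i, (B2 g i)⁻¹ * g.2.1 * B3 g i,
    Pmat n i * g.2.2 * Pmat n i)

/-- Unipotent upper-triangular. -/
def IsUniUpper {n : ℕ} (M : Matrix (Fin n) (Fin n) ℂ) : Prop :=
  (∀ p, M p p = 1) ∧ ∀ p q : Fin n, q < p → M p q = 0

/-- Unipotent lower-triangular. -/
def IsUniLower {n : ℕ} (M : Matrix (Fin n) (Fin n) ℂ) : Prop :=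
  (∀ p, M p p = 1) ∧ ∀ p q : Fin n, p < q → M p q = 0

/-- Membership in `U_n × L_n × 𝔱`. -/
def InT {n : ℕ} (g : Trip n) : Prop :=
  IsUniUpper g.1 ∧ IsUniLower g.2.1 ∧ ∀ p q : Fin n, p ≠ q → g.2.2 p q = 0

/-- The action of the full row word `β_1 β_2 ⋯ β_{n−1}` (right action, applied
in reading order). -/
def actRow (n : ℕ) (g : Trip n) : Trip n :=
  (List.range (n - 1)).foldl (fun h i => act n i h) g

/-- `blk` with the diagonal `δ` outside the block, so that diagonal matrices have this shape too. -/
def blkDiag (n i : ℕ) (a b c d : ℂ) (δ : Fin n → ℂ) : Matrix (Fin n) (Fin n) ℂ :=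
  Matrix.of fun p q =>
    if p.1 = i ∧ q.1 = i then a
    else if p.1 = i ∧ q.1 = i + 1 then b
    else if p.1 = i + 1 ∧ q.1 = i then c
    else if p.1 = i + 1 ∧ q.1 = i + 1 then d
    else if p = q then δ p else 0

section blkDiag

variable {n i : ℕ} {a b c d a' b' c' d' : ℂ} {δ δ' : Fin n → ℂ}

lemma blk_eq_blkDiag : blk n i a b c d = blkDiag n i a b c d 1 := rfl

lemma blkDiag_apply (p q : Fin n) :
    blkDiag n i a b c d δ p q =
      if p.1 = i then (if q.1 = i then a else if q.1 = i + 1 then b else 0)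
      else if p.1 = i + 1 then (if q.1 = i then c else if q.1 = i + 1 then d else 0)
      else if p = q then δ p else 0 := by
  simp only [blkDiag, of_apply]
  split_ifs <;> simp_all [Fin.ext_iff]

lemma blkDiag_congr (ha : a = a') (hb : b = b') (hc : c = c') (hd : d = d')
    (hδ : ∀ p : Fin n, p.1 ≠ i → p.1 ≠ i + 1 → δ p = δ' p) :
    blkDiag n i a b c d δ = blkDiag n i a' b' c' d' δ' := by
  ext p q
  simp only [blkDiag_apply, ha, hb, hc, hd]
  split_ifs <;> simp_all

lemma blkDiag_transpose : (blkDiag n i a b c d δ)ᵀ = blkDiag n i a c b d δ := by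
  ext p q
  simp only [transpose_apply, blkDiag_apply]
  split_ifs <;> first | rfl | (subst_vars; rfl) | omega

lemma blkDiag_one : blkDiag n i 1 0 0 1 1 = 1 := by
  ext p q
  simp only [blkDiag_apply, one_apply, Pi.one_apply]
  split_ifs <;> simp_all [Fin.ext_iff]

variable (hi : i + 1 < n)
include hi

lemma blkDiag_mul_apply (A : Matrix (Fin n) (Fin n) ℂ) (p q : Fin n) :
    (blkDiag n i a b c d δ * A) p q =
      if p.1 = i then a * A ⟨i, by omega⟩ q + b * A ⟨i + 1, hi⟩ q
      else if p.1 = i + 1 then c * A ⟨i, by omega⟩ q + d * A ⟨i + 1, hi⟩ q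
      else δ p * A p q := by
  rw [mul_apply]
  by_cases hp : p.1 = i ∨ p.1 = i + 1
  · rw [Fintype.sum_eq_add ⟨i, by omega⟩ ⟨i + 1, hi⟩ (by simp [Fin.ext_iff])]
    · rcases hp with hp | hp <;> simp [blkDiag_apply, hp]
    · rintro k ⟨hk, hk'⟩
      simp only [ne_eq, Fin.ext_iff] at hk hk'
      rcases hp with hp | hp <;> simp [blkDiag_apply, hp, hk, hk']
  · push Not at hp
    rw [Fintype.sum_eq_single p]
    · simp [blkDiag_apply, hp]
    · intro k hk
      simp [blkDiag_apply, hp, Ne.symm hk]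

lemma mul_blkDiag_apply (A : Matrix (Fin n) (Fin n) ℂ) (p q : Fin n) :
    (A * blkDiag n i a b c d δ) p q =
      if q.1 = i then A p ⟨i, by omega⟩ * a + A p ⟨i + 1, hi⟩ * c
      else if q.1 = i + 1 then A p ⟨i, by omega⟩ * b + A p ⟨i + 1, hi⟩ * d
      else A p q * δ q := by
  rw [← transpose_apply (A * _), transpose_mul, blkDiag_transpose, blkDiag_mul_apply hi]
  simp only [transpose_apply, mul_comm]

lemma blkDiag_mul_blkDiag :
    blkDiag n i a b c d δ * blkDiag n i a' b' c' d' δ' =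
      blkDiag n i (a * a' + b * c') (a * b' + b * d') (c * a' + d * c') (c * b' + d * d')
        (δ * δ') := by
  ext p q
  simp only [blkDiag_mul_apply hi, blkDiag_apply, Pi.mul_apply]
  split_ifs <;> simp_all [Fin.ext_iff]

lemma diagonal_eq_blkDiag (μ : Fin n → ℂ) :
    diagonal μ = blkDiag n i (μ ⟨i, by omega⟩) 0 0 (μ ⟨i + 1, hi⟩) μ := by
  ext p q
  simp only [blkDiag_apply, diagonal_apply]
  split_ifs <;> simp_all [Fin.ext_iff]
  all_goals exact congrArg μ (Fin.ext ‹_›)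

lemma inv_blk_of_d_zero (x : ℂ) : (blk n i x 1 1 0)⁻¹ = blk n i 0 1 1 (-x) := by
  refine inv_eq_right_inv ?_
  rw [blk_eq_blkDiag, blk_eq_blkDiag, blkDiag_mul_blkDiag hi, ← blkDiag_one (n := n) (i := i)]
  congr 1 <;> simp

lemma inv_blk_of_a_zero (x : ℂ) : (blk n i 0 1 1 x)⁻¹ = blk n i (-x) 1 1 0 := by
  refine inv_eq_right_inv ?_
  rw [blk_eq_blkDiag, blk_eq_blkDiag, blkDiag_mul_blkDiag hi, ← blkDiag_one (n := n) (i := i)]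
  congr 1 <;> simp

end blkDiag

section unipotent

variable {n : ℕ} {M : Matrix (Fin n) (Fin n) ℂ}

lemma IsUniUpper.transpose (hM : IsUniUpper M) : IsUniLower Mᵀ :=
  ⟨hM.1, fun p q hpq => hM.2 q p hpq⟩

lemma IsUniLower.transpose (hM : IsUniLower M) : IsUniUpper Mᵀ :=
  ⟨hM.1, fun p q hqp => hM.2 q p hqp⟩

lemma IsUniUpper.det_eq_one (hM : IsUniUpper M) : M.det = 1 := by
  rw [det_of_isUpperTriangular fun p q hqp => hM.2 p q hqp]
  simp [hM.1]

lemma IsUniLower.det_eq_one (hM : IsUniLower M) : M.det = 1 := by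
  rw [← det_transpose, hM.transpose.det_eq_one]

lemma IsUniUpper.diagonal_mul_mul_diagonal (hM : IsUniUpper M) {d e : Fin n → ℂ}
    (hde : ∀ j, d j * e j = 1) : IsUniUpper (diagonal d * M * diagonal e) :=
  ⟨fun p => by simp [hM.1 p, hde p], fun p q hqp => by simp [hM.2 p q hqp]⟩

lemma IsUniLower.diagonal_mul_mul_diagonal (hM : IsUniLower M) {d e : Fin n → ℂ}
    (hde : ∀ j, d j * e j = 1) : IsUniLower (diagonal d * M * diagonal e) :=
  ⟨fun p => by simp [hM.1 p, hde p], fun p q hpq => by simp [hM.2 p q hpq]⟩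

/-- `L'⁻¹ L = D U' U⁻¹ D⁻¹` is both lower and upper triangular, hence diagonal, and comparing
diagonals in `L = L' (L'⁻¹ L)` shows that it is `1`. -/
lemma IsUniLower.eq_of_mul_diagonal_mul_eq {L L' U U' : Matrix (Fin n) (Fin n) ℂ}
    {d : Fin n → ℂ} (hd : ∀ j, d j ≠ 0) (hL : IsUniLower L) (hL' : IsUniLower L')
    (hU : IsUniUpper U) (hU' : IsUniUpper U')
    (h : L * diagonal d * U = L' * diagonal d * U') : L = L' := by
  have : Invertible L' := invertibleOfIsUnitDet _ (by simp [hL'.det_eq_one])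
  have : Invertible U := invertibleOfIsUnitDet _ (by simp [hU.det_eq_one])
  have hX : (L'⁻¹ * L).IsLowerTriangular :=
    (blockTriangular_inv_of_blockTriangular fun p q hpq => hL'.2 p q hpq).mul
      fun p q hpq => hL.2 p q hpq
  have hY : (U' * U⁻¹).IsUpperTriangular :=
    BlockTriangular.mul (fun p q hqp => hU'.2 p q hqp)
      (blockTriangular_inv_of_blockTriangular fun p q hqp => hU.2 p q hqp)
  have hXY : L'⁻¹ * L * diagonal d = diagonal d * (U' * U⁻¹) := by
    calc L'⁻¹ * L * diagonal d = L'⁻¹ * (L * diagonal d * U) * U⁻¹ := by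
          simp [Matrix.mul_assoc]
      _ = diagonal d * (U' * U⁻¹) := by
          rw [h]
          simp [← Matrix.mul_assoc]
  have hXdiag : L'⁻¹ * L = diagonal fun p => (L'⁻¹ * L) p p := by
    ext p q
    rcases lt_trichotomy p q with hpq | rfl | hqp
    · simp [hX hpq, hpq.ne]
    · simp
    · have := congrFun (congrFun hXY p) q
      simp only [mul_diagonal, diagonal_mul, hY hqp, mul_zero, mul_eq_zero, hd q, or_false] at this
      simp [this, hqp.ne']
  have hX1 : L'⁻¹ * L = 1 := by
    rw [hXdiag, ← diagonal_one]
    congr 1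
    funext p
    have := hL.1 p
    rw [← mul_nonsing_inv_cancel_left L' L (by simp [hL'.det_eq_one]), hXdiag, mul_diagonal,
      hL'.1, one_mul] at this
    exact this
  rw [← Matrix.mul_one L', ← hX1, ← Matrix.mul_assoc, mul_inv_of_invertible, Matrix.one_mul]

end unipotent

lemma exp_neg_mul_mul_exp (c z : ℂ) : Complex.exp (-c * z) * Complex.exp (c * z) = 1 := by
  rw [← Complex.exp_add, neg_mul, neg_add_cancel, Complex.exp_zero]

lemma entry_eq_of_lt {n i j : ℕ} (M : Matrix (Fin n) (Fin n) ℂ) (hi : i < n) (hj : j < n) :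
    entry M i j = M ⟨i, hi⟩ ⟨j, hj⟩ := by
  simp [entry, hi, hj]

def expDiag {n : ℕ} (c : ℂ) (M : Matrix (Fin n) (Fin n) ℂ) : Matrix (Fin n) (Fin n) ℂ :=
  diagonal fun j => Complex.exp (c * M j j)

def monodromy {n : ℕ} (g : Trip n) : Matrix (Fin n) (Fin n) ℂ :=
  g.2.1 * expDiag (-(2 * Real.pi * Complex.I)) g.2.2 * g.1

section expDiag

variable {n : ℕ}

lemma expDiag_neg_mul_expDiag (c : ℂ) (M : Matrix (Fin n) (Fin n) ℂ) :
    expDiag (-c) M * expDiag c M = 1 := by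
  simp only [expDiag, diagonal_mul_diagonal, exp_neg_mul_mul_exp, diagonal_one]

lemma expDiag_mul_expDiag_neg (c : ℂ) (M : Matrix (Fin n) (Fin n) ℂ) :
    expDiag c M * expDiag (-c) M = 1 := by
  simpa using expDiag_neg_mul_expDiag (-c) M

end expDiag

section monodromy

variable {n : ℕ}

lemma isUnit_monodromy {g : Trip n} (hg : InT g) : IsUnit (monodromy g) := by
  rw [isUnit_iff_isUnit_det, monodromy, det_mul, det_mul, hg.1.det_eq_one, hg.2.1.det_eq_one,
    one_mul, mul_one, expDiag, det_diagonal]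
  exact (Finset.prod_ne_zero_iff.mpr fun j _ => Complex.exp_ne_zero _).isUnit

lemma eq_of_monodromy_eq {h h' : Trip n} (hh : InT h) (hh' : InT h') (h3 : h.2.2 = h'.2.2)
    (hm : monodromy h = monodromy h') : h = h' := by
  rw [monodromy, monodromy, ← h3, expDiag] at hm
  have hd (j : Fin n) : Complex.exp (-(2 * Real.pi * Complex.I) * h.2.2 j j) ≠ 0 :=
    Complex.exp_ne_zero _
  have h2 := hh.2.1.eq_of_mul_diagonal_mul_eq hd hh'.2.1 hh.1 hh'.1 hm
  have h1 := hh.1.transpose.eq_of_mul_diagonal_mul_eq hd hh'.1.transpose hh.2.1.transpose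
    hh'.2.1.transpose (by simpa [transpose_mul, Matrix.mul_assoc] using congrArg transpose hm)
  exact Prod.ext (by simpa using congrArg transpose h1) (Prod.ext h2 h3)

lemma monodromy_conj (g : Trip n) :
    monodromy (expDiag (-(2 * Real.pi * Complex.I)) g.2.2 * g.1 *
          expDiag (2 * Real.pi * Complex.I) g.2.2,
        expDiag (-(2 * Real.pi * Complex.I)) g.2.2 * g.2.1 *
          expDiag (2 * Real.pi * Complex.I) g.2.2, g.2.2) =
      expDiag (-(2 * Real.pi * Complex.I)) g.2.2 * monodromy g *
        expDiag (2 * Real.pi * Complex.I) g.2.2 := by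
  simp only [monodromy, Matrix.mul_assoc]
  rw [← Matrix.mul_assoc (expDiag _ _) (expDiag _ _), expDiag_mul_expDiag_neg, Matrix.one_mul]

lemma InT.snd_fst_apply_zero_eq [NeZero n] {G : Trip n} (hG : InT G) (p : Fin n) :
    G.2.1 p 0 = Complex.exp (2 * Real.pi * Complex.I * G.2.2 0 0) * monodromy G p 0 := by
  have hU (k : Fin n) (hk : k ≠ 0) : G.1 k 0 = 0 :=
    hG.1.2 k 0 (lt_of_le_of_ne (Fin.zero_le k) (Ne.symm hk))
  rw [monodromy, mul_apply, Fintype.sum_eq_single 0 (fun k hk => by rw [hU k hk, mul_zero]),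
    hG.1.1, mul_one, expDiag, mul_diagonal, mul_left_comm, ← Complex.exp_add]
  ring_nf
  rw [Complex.exp_zero, mul_one]

end monodromy

section act

variable {n i : ℕ} (hi : i + 1 < n)
include hi

lemma Pmat_mul_mul_Pmat (M : Matrix (Fin n) (Fin n) ℂ) :
    Pmat n i * M * Pmat n i =
      M.submatrix (Equiv.swap ⟨i, by omega⟩ ⟨i + 1, hi⟩)
        (Equiv.swap ⟨i, by omega⟩ ⟨i + 1, hi⟩) := by
  ext p q
  simp only [Pmat, blk_eq_blkDiag, mul_blkDiag_apply hi, blkDiag_mul_apply hi, submatrix_apply,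
    Equiv.swap_apply_def, Fin.ext_iff, Pi.one_apply]
  split_ifs <;> simp_all

lemma act_eq (s : Trip n) : act n i s =
    (blkDiag n i 0 1 1 (-s.1 ⟨i, by omega⟩ ⟨i + 1, hi⟩) 1 * s.1 *
        blkDiag n i 0 1 1 (s.2.1 ⟨i + 1, hi⟩ ⟨i, by omega⟩) 1,
      blkDiag n i (-s.2.1 ⟨i + 1, hi⟩ ⟨i, by omega⟩) 1 1 0 1 * s.2.1 *
        blkDiag n i (hbar s.2.2 i * s.1 ⟨i, by omega⟩ ⟨i + 1, hi⟩) 1 1 0 1,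
      s.2.2.submatrix (Equiv.swap ⟨i, by omega⟩ ⟨i + 1, hi⟩)
        (Equiv.swap ⟨i, by omega⟩ ⟨i + 1, hi⟩)) := by
  simp only [act, B1, B2, B3, entry_eq_of_lt _ (Nat.lt_of_succ_lt hi) hi,
    entry_eq_of_lt _ hi (Nat.lt_of_succ_lt hi)]
  rw [inv_blk_of_d_zero hi, inv_blk_of_a_zero hi, Pmat_mul_mul_Pmat hi]
  rfl

lemma isUniUpper_act_fst {s : Trip n} (hs : IsUniUpper s.1) : IsUniUpper (act n i s).1 := by
  obtain ⟨hdiag, hlow⟩ := hs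
  have hz (p q : Fin n) (h : q.1 < p.1) : s.1 p q = 0 := hlow p q h
  rw [act_eq hi]
  refine ⟨fun p => ?_, fun p q (hqp : q.1 < p.1) => ?_⟩ <;>
  · simp only [mul_blkDiag_apply hi, blkDiag_mul_apply hi]
    split_ifs <;> simp (disch := first | omega | (simp only [Fin.val_mk]; omega)) [hz, hdiag]

lemma isUniLower_act_snd_fst {s : Trip n} (hs : IsUniLower s.2.1) :
    IsUniLower (act n i s).2.1 := by
  obtain ⟨hdiag, hup⟩ := hs
  have hz (p q : Fin n) (h : p.1 < q.1) : s.2.1 p q = 0 := hup p q h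
  rw [act_eq hi]
  refine ⟨fun p => ?_, fun p q (hpq : p.1 < q.1) => ?_⟩ <;>
  · simp only [mul_blkDiag_apply hi, blkDiag_mul_apply hi]
    split_ifs <;> simp (disch := first | omega | (simp only [Fin.val_mk]; omega)) [hz, hdiag]

lemma inT_act {s : Trip n} (hs : InT s) : InT (act n i s) := by
  refine ⟨isUniUpper_act_fst hi hs.1, isUniLower_act_snd_fst hi hs.2.1, fun p q hpq => ?_⟩
  rw [act_eq hi]
  exact hs.2.2 _ _ ((Equiv.injective _).ne hpq)

lemma act_snd_fst_apply_succ (s : Trip n) (p : Fin n) (hp : i + 1 < p.1) :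
    (act n i s).2.1 p ⟨i + 1, hi⟩ = s.2.1 p ⟨i, by omega⟩ := by
  rw [act_eq hi]
  simp only [mul_blkDiag_apply hi, blkDiag_mul_apply hi]
  split_ifs <;> first | omega | simp

/-- The identity `ħ e^{-2πi M_{i+1,i+1}} = e^{-2πi M_{i,i}}` makes the off-diagonal entry of the
product vanish. -/
lemma blkDiag_hbar_mul_expDiag_swap_mul (M : Matrix (Fin n) (Fin n) ℂ) (x : ℂ) :
    blkDiag n i (hbar M i * x) 1 1 0 1 *
        expDiag (-(2 * Real.pi * Complex.I))
          (M.submatrix (Equiv.swap ⟨i, by omega⟩ ⟨i + 1, hi⟩)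
            (Equiv.swap ⟨i, by omega⟩ ⟨i + 1, hi⟩)) *
        blkDiag n i 0 1 1 (-x) 1 =
      expDiag (-(2 * Real.pi * Complex.I)) M := by
  have hexp : hbar M i * Complex.exp (-(2 * Real.pi * Complex.I) * M ⟨i + 1, hi⟩ ⟨i + 1, hi⟩) =
      Complex.exp (-(2 * Real.pi * Complex.I) * M ⟨i, by omega⟩ ⟨i, by omega⟩) := by
    rw [hbar, entry_eq_of_lt _ hi hi, entry_eq_of_lt _ (by omega) (by omega), ← Complex.exp_add]
    ring_nf
  rw [expDiag, expDiag, diagonal_eq_blkDiag hi, diagonal_eq_blkDiag hi, blkDiag_mul_blkDiag hi,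
    blkDiag_mul_blkDiag hi]
  apply blkDiag_congr
  · simp
  · simp only [submatrix_apply, Equiv.swap_apply_left, Equiv.swap_apply_right]
    linear_combination x * hexp
  · simp
  · simp only [submatrix_apply, Equiv.swap_apply_left, Equiv.swap_apply_right]
    ring
  · intro p hp hp'
    simp only [Pi.mul_apply, Pi.one_apply, submatrix_apply, one_mul, mul_one]
    rw [Equiv.swap_apply_of_ne_of_ne (by simp [Fin.ext_iff, hp]) (by simp [Fin.ext_iff, hp'])]

lemma blkDiag_mul_monodromy_act (s : Trip n) :
    blkDiag n i 0 1 1 (s.2.1 ⟨i + 1, hi⟩ ⟨i, by omega⟩) 1 * monodromy (act n i s) =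
      monodromy s * blkDiag n i 0 1 1 (s.2.1 ⟨i + 1, hi⟩ ⟨i, by omega⟩) 1 := by
  have hinv : blkDiag n i 0 1 1 (s.2.1 ⟨i + 1, hi⟩ ⟨i, by omega⟩) 1 *
      blkDiag n i (-s.2.1 ⟨i + 1, hi⟩ ⟨i, by omega⟩) 1 1 0 1 = 1 := by
    rw [blkDiag_mul_blkDiag hi, ← blkDiag_one (n := n) (i := i)]
    congr 1 <;> simp
  rw [act_eq hi, monodromy, monodromy,
    ← blkDiag_hbar_mul_expDiag_swap_mul hi s.2.2 (s.1 ⟨i, by omega⟩ ⟨i + 1, hi⟩)]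
  simp only [← Matrix.mul_assoc, hinv, Matrix.one_mul]

end act

lemma cycleRange_comp_swap {n k : ℕ} (hk : k + 1 < n) :
    ⇑(Fin.cycleRange (⟨k, by omega⟩ : Fin n)) ∘ ⇑(Equiv.swap (⟨k, by omega⟩ : Fin n) ⟨k + 1, hk⟩) =
      ⇑(Fin.cycleRange (⟨k + 1, hk⟩ : Fin n)) := by
  have : NeZero n := ⟨by omega⟩
  funext j
  simp only [Function.comp_apply, Fin.cycleRange_apply, Equiv.swap_apply_def]
  split_ifs <;> simp_all [Fin.ext_iff, Fin.lt_def, Fin.val_add_one_of_lt'] <;> omega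

def actRowPrefix (n k : ℕ) (g : Trip n) : Trip n :=
  (List.range k).foldl (fun h i => act n i h) g

section actRowPrefix

variable {n k : ℕ} {g : Trip n}

lemma actRowPrefix_zero : actRowPrefix n 0 g = g := rfl

lemma actRowPrefix_succ : actRowPrefix n (k + 1) g = act n k (actRowPrefix n k g) := by
  simp [actRowPrefix, List.range_succ]

lemma inT_actRowPrefix (hg : InT g) (hk : k < n) : InT (actRowPrefix n k g) := by
  induction k with
  | zero => exact hg
  | succ k ih => exact actRowPrefix_succ ▸ inT_act hk (ih (by omega))

lemma actRowPrefix_snd_snd (hk : k < n) :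
    (actRowPrefix n k g).2.2 =
      g.2.2.submatrix (Fin.cycleRange (⟨k, hk⟩ : Fin n)) (Fin.cycleRange (⟨k, hk⟩ : Fin n)) := by
  induction k with
  | zero =>
    have : NeZero n := ⟨by omega⟩
    simp [actRowPrefix_zero]
  | succ k ih =>
    rw [actRowPrefix_succ, act_eq hk, ih (by omega), submatrix_submatrix, cycleRange_comp_swap hk]

lemma actRowPrefix_snd_fst_apply (hk : k < n) (p : Fin n) (hp : k < p.1) :
    (actRowPrefix n k g).2.1 p ⟨k, hk⟩ = g.2.1 p ⟨0, by omega⟩ := by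
  induction k with
  | zero => rfl
  | succ k ih =>
    rw [actRowPrefix_succ, act_snd_fst_apply_succ hk _ p hp, ih (by omega) (by omega)]

end actRowPrefix

/-- The matrix with columns `e₁, …, e_k, w, e_{k+1}, …, e_{n-1}`; it is the product of the
matrices `B₂` of the first `k` steps of a row. -/
def rowMat (n k : ℕ) (w : Fin n → ℂ) : Matrix (Fin n) (Fin n) ℂ :=
  Matrix.of fun p q =>
    if q.1 < k then (if p.1 = q.1 + 1 then 1 else 0)
    else if q.1 = k then w p
    else if p = q then 1 else 0

section rowMat

variable {n k : ℕ}

lemma rowMat_zero {w : Fin n → ℂ} (hw : ∀ p : Fin n, w p = if p.1 = 0 then 1 else 0) :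
    rowMat n 0 w = 1 := by
  ext p q
  simp only [rowMat, of_apply, hw, one_apply, Fin.ext_iff]
  split_ifs <;> first | rfl | omega

lemma rowMat_mul_blkDiag (hk : k + 1 < n) (w : Fin n → ℂ) (c : ℂ) :
    rowMat n k w * blkDiag n k 0 1 1 c 1 =
      rowMat n (k + 1) (fun p => w p + if p.1 = k + 1 then c else 0) := by
  ext p q
  rw [mul_blkDiag_apply hk]
  simp only [rowMat, of_apply, Fin.ext_iff, Pi.one_apply]
  split_ifs <;> first | omega | rfl | ring1

lemma rowMat_mul_monodromy_actRowPrefix {g : Trip n} (hg : InT g) (hk : k < n) :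
    rowMat n k (fun p => if p.1 ≤ k then g.2.1 p ⟨0, by omega⟩ else 0) *
        monodromy (actRowPrefix n k g) =
      monodromy g * rowMat n k (fun p => if p.1 ≤ k then g.2.1 p ⟨0, by omega⟩ else 0) := by
  induction k with
  | zero =>
    rw [rowMat_zero, actRowPrefix_zero, Matrix.one_mul, Matrix.mul_one]
    intro p
    split_ifs with h h'
    · exact (congrArg (g.2.1 p) (Fin.ext h'.symm)).trans (hg.2.1.1 p)
    all_goals first | omega | rfl
  | succ k ih =>
    have hstep : rowMat n k (fun p => if p.1 ≤ k then g.2.1 p ⟨0, by omega⟩ else 0) *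
          blkDiag n k 0 1 1 ((actRowPrefix n k g).2.1 ⟨k + 1, hk⟩ ⟨k, by omega⟩) 1 =
        rowMat n (k + 1) (fun p => if p.1 ≤ k + 1 then g.2.1 p ⟨0, by omega⟩ else 0) := by
      rw [rowMat_mul_blkDiag hk, actRowPrefix_snd_fst_apply _ _ (by simp)]
      congr 1
      ext p
      split_ifs <;> first | omega | simp
      exact congrArg (g.2.1 · _) (Fin.ext ‹p.1 = k + 1›.symm)
    rw [← hstep, actRowPrefix_succ, Matrix.mul_assoc, blkDiag_mul_monodromy_act hk,
      ← Matrix.mul_assoc, ih (by omega), Matrix.mul_assoc]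

end rowMat

section actRow

variable {n : ℕ} [NeZero n]

lemma inT_actRow {g : Trip n} (hg : InT g) : InT (actRow n g) :=
  inT_actRowPrefix hg (Nat.sub_one_lt (NeZero.ne n))

lemma actRow_snd_snd (g : Trip n) : (actRow n g).2.2 = g.2.2.submatrix (· + 1) (· + 1) := by
  obtain ⟨m, rfl⟩ := Nat.exists_eq_add_one_of_ne_zero (NeZero.ne n)
  have hlast : (⟨m + 1 - 1, by omega⟩ : Fin (m + 1)) = Fin.last m := Fin.ext (by simp)
  rw [actRow, ← actRowPrefix, actRowPrefix_snd_snd (by omega), hlast, Fin.cycleRange_last]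
  rw [show ⇑(finRotate (m + 1)) = (· + 1) from funext finRotate_apply]

lemma rowMat_mul_monodromy_actRow {g : Trip n} (hg : InT g) :
    rowMat n (n - 1) (fun p => g.2.1 p 0) * monodromy (actRow n g) =
      monodromy g * rowMat n (n - 1) (fun p => g.2.1 p 0) := by
  have hw : (fun p : Fin n => g.2.1 p 0) =
      fun p => if p.1 ≤ n - 1 then g.2.1 p ⟨0, Nat.pos_of_neZero n⟩ else 0 := by
    funext p
    rw [if_pos (by omega)]
    rfl
  rw [hw]
  exact rowMat_mul_monodromy_actRowPrefix hg (Nat.sub_one_lt (NeZero.ne n))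

end actRow

open Fin.CommRing in
/-- The product of the `rowMat`s of the first `r` rows; with indices mod `n`, its column `q` is
`e_{q+r}` for `q < n - r` and `e^{2πi (g₃)_{q+r,q+r}} · monodromy g · e_{q+r}` for the others. -/
def conjMat {n : ℕ} [NeZero n] (g : Trip n) (r : ℕ) : Matrix (Fin n) (Fin n) ℂ :=
  Matrix.of fun p q =>
    if q.1 < n - r then (if p = q + (r : Fin n) then 1 else 0)
    else Complex.exp (2 * Real.pi * Complex.I * g.2.2 (q + (r : Fin n)) (q + (r : Fin n))) *
      monodromy g p (q + (r : Fin n))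

section conjMat

open Fin.CommRing

variable {n : ℕ} [NeZero n]

lemma conjMat_zero (g : Trip n) : conjMat g 0 = 1 := by
  ext p q
  simp [conjMat, one_apply]

lemma conjMat_mul_rowMat {g G : Trip n} {r : ℕ} (hr : r < n) (hG : InT G)
    (hG0 : G.2.2 0 0 = g.2.2 (r : Fin n) (r : Fin n))
    (hGQ : conjMat g r * monodromy G = monodromy g * conjMat g r) :
    conjMat g r * rowMat n (n - 1) (fun p => G.2.1 p 0) = conjMat g (r + 1) := by
  ext p q
  rw [mul_apply]
  by_cases hq : q.1 < n - 1
  · have hq1 : (q + 1 : Fin n).1 = q.1 + 1 := Fin.val_add_one_of_lt' (by omega)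
    rw [Fintype.sum_eq_single (q + 1)]
    · simp only [conjMat, rowMat, of_apply, if_pos hq, hq1, if_true, mul_one, Nat.cast_add,
        Nat.cast_one, add_assoc, add_comm (1 : Fin n)]
      congr 1
      exact propext (by omega)
    · intro k hk
      simp only [rowMat, of_apply, if_pos hq]
      rw [if_neg (fun h => hk (Fin.ext (by omega))), mul_zero]
  · have hq' : q.1 = n - 1 := by omega
    have hcol (k : Fin n) : rowMat n (n - 1) (fun p => G.2.1 p 0) k q =
        Complex.exp (2 * Real.pi * Complex.I * g.2.2 (r : Fin n) (r : Fin n)) *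
          monodromy G k 0 := by
      simp only [rowMat, of_apply, if_neg hq, if_pos hq', hG.snd_fst_apply_zero_eq, hG0]
    have hr0 : ∀ k : Fin n, conjMat g r k 0 = if k = (r : Fin n) then 1 else 0 := by
      intro k
      simp only [conjMat, of_apply, Fin.val_zero, zero_add]
      rw [if_pos (by omega)]
    have hidx : q + ((r + 1 : ℕ) : Fin n) = (r : Fin n) := by
      rw [Fin.ext_iff, Fin.val_add, Fin.val_natCast, Fin.val_natCast, Nat.add_mod_mod, hq',
        show n - 1 + (r + 1) = r + n by omega, Nat.add_mod_right]
    simp_rw [hcol, mul_left_comm _ (Complex.exp _), ← Finset.mul_sum, ← mul_apply, hGQ, mul_apply,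
      hr0]
    simp only [conjMat, of_apply, if_neg (show ¬ q.1 < n - (r + 1) by omega), hidx, mul_ite,
      mul_one, mul_zero, Finset.sum_ite_eq', Finset.mem_univ, if_true]

end conjMat

section iterate

open Fin.CommRing

variable {n : ℕ} [NeZero n]

lemma inT_iterate_actRow {g : Trip n} (hg : InT g) (r : ℕ) : InT ((actRow n)^[r] g) := by
  induction r with
  | zero => exact hg
  | succ r ih => exact (Function.iterate_succ_apply' _ r g).symm ▸ inT_actRow ih

lemma iterate_actRow_snd_snd (g : Trip n) (r : ℕ) :
    ((actRow n)^[r] g).2.2 = g.2.2.submatrix (· + (r : Fin n)) (· + (r : Fin n)) := by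
  induction r with
  | zero => simp only [Function.iterate_zero, id, Nat.cast_zero, add_zero]; rfl
  | succ r ih =>
    rw [Function.iterate_succ_apply', actRow_snd_snd, ih, submatrix_submatrix]
    simp only [Function.comp_def, Nat.cast_succ, add_assoc, add_comm (1 : Fin n)]

lemma conjMat_mul_monodromy_iterate_actRow {g : Trip n} (hg : InT g) {r : ℕ} (hr : r ≤ n) :
    conjMat g r * monodromy ((actRow n)^[r] g) = monodromy g * conjMat g r := by
  induction r with
  | zero => simp [conjMat_zero]
  | succ r ih =>
    have hGr := inT_iterate_actRow hg r
    have hrow := conjMat_mul_rowMat (by omega) hGr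
      (by simp [iterate_actRow_snd_snd]) (ih (by omega))
    rw [← hrow, Function.iterate_succ_apply', Matrix.mul_assoc, rowMat_mul_monodromy_actRow hGr,
      ← Matrix.mul_assoc, ih (by omega), Matrix.mul_assoc]

lemma conjMat_self (g : Trip n) :
    conjMat g n = monodromy g * expDiag (2 * Real.pi * Complex.I) g.2.2 := by
  ext p q
  simp [conjMat, expDiag, mul_comm]

lemma monodromy_iterate_actRow_self {g : Trip n} (hg : InT g) :
    monodromy ((actRow n)^[n] g) =
      expDiag (-(2 * Real.pi * Complex.I)) g.2.2 * monodromy g *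
        expDiag (2 * Real.pi * Complex.I) g.2.2 := by
  have h := conjMat_mul_monodromy_iterate_actRow hg le_rfl
  rw [conjMat_self, Matrix.mul_assoc] at h
  calc monodromy ((actRow n)^[n] g)
      = expDiag (-(2 * Real.pi * Complex.I)) g.2.2 *
          (expDiag (2 * Real.pi * Complex.I) g.2.2 * monodromy ((actRow n)^[n] g)) := by
        rw [← Matrix.mul_assoc, expDiag_neg_mul_expDiag, Matrix.one_mul]
    _ = _ := by rw [(isUnit_monodromy hg).mul_left_cancel h, Matrix.mul_assoc]

end iterate

/-- The generator `β = (β_1⋯β_{n−1})ⁿ` of the center of `B_n` acts on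
`U_n × L_n × 𝔱` by simultaneous conjugation:
`g^β = (e^{−2πi g₃} g₁ e^{2πi g₃}, e^{−2πi g₃} g₂ e^{2πi g₃}, g₃)`. -/
theorem stmt11 (n : ℕ) (hn : 2 ≤ n) (g : Trip n) (hg : InT g) :
    (actRow n)^[n] g
      = (Matrix.diagonal (fun j => Complex.exp (-(2 * Real.pi * Complex.I) * g.2.2 j j))
            * g.1 * Matrix.diagonal (fun j => Complex.exp (2 * Real.pi * Complex.I * g.2.2 j j)),
         Matrix.diagonal (fun j => Complex.exp (-(2 * Real.pi * Complex.I) * g.2.2 j j))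
            * g.2.1 * Matrix.diagonal (fun j => Complex.exp (2 * Real.pi * Complex.I * g.2.2 j j)),
         g.2.2) := by
  have : NeZero n := ⟨by omega⟩
  have hexp (j : Fin n) := exp_neg_mul_mul_exp (2 * Real.pi * Complex.I) (g.2.2 j j)
  refine eq_of_monodromy_eq (inT_iterate_actRow hg n)
    ⟨hg.1.diagonal_mul_mul_diagonal hexp, hg.2.1.diagonal_mul_mul_diagonal hexp, hg.2.2⟩ ?_ ?_
  · rw [iterate_actRow_snd_snd]
    simp only [Fin.natCast_self, add_zero]
    rfl
  · rw [monodromy_iterate_actRow_self hg]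
    exact (monodromy_conj g).symm
end
end
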